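/- If W ⊆ Σ^ω is positional over Eve-games, then the residuals of W are totally ordered by inclusion: for all u₁, u₂ ∈ Σ*, either u₁⁻¹W ⊆ u₂⁻¹W or u₂⁻¹W ⊆ u₁⁻¹W. -/

import Mathlib

/-!
If `x ∈ u₁⁻¹W \ u₂⁻¹W` and `y ∈ u₂⁻¹W \ u₁⁻¹W`, consider the Eve-game with one choice vertex
`d`, from which Eve reads either `x` or `y`, and two deterministic chains reading `u₁`
(resp. `u₂`) into `d`. Eve wins from the start of both chains, but a positional strategy has to
commit at `d` to one word `z ∈ {x, y}`, and then `u₁z` and `u₂z` both lie in `W`, which fails for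
either choice of `z`. More generally, for every nonempty set `S` of infinite words a positional
`W` admits one `z ∈ S` that serves as a winning continuation after every finite word that has
one in `S`.
-/

universe u

/-- Concatenation of a finite word with an infinite word. -/
def wcat {A : Type*} (u : List A) (x : ℕ → A) : ℕ → A := fun n =>
  if h : n < u.length then u.get ⟨n, h⟩ else x (n - u.length)

/-- The resid of a language of infinite words with respect to a finite word. -/
def resid {A : Type*} (L : Set (ℕ → A)) (u : List A) : Set (ℕ → A) := {x | wcat u x ∈ L}

/-- The infinite word `w^ω` obtained by repeating a (nonempty) finite word `w`. -/
def omegaPow {A : Type*} [Inhabited A] (w : List A) : ℕ → A :=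
  fun n => w.getD (n % w.length) default

/-- The path obtained from `v` by following the positional strategy `σ`. -/
def stratPath {V A : Type*} (σ : V → A × V) (v : V) : ℕ → V
  | 0 => v
  | n + 1 => (σ (stratPath σ v n)).2

/-- `W` is positional over Eve-games: in every (possibly infinite) Eve-game, i.e.
every `A`-labelled directed graph in which each vertex has an outgoing edge, there
is a single positional strategy winning from every vertex from which some winning
play exists. -/
def PositionalEve {A : Type u} (W : Set (ℕ → A)) : Prop :=
  ∀ (V : Type u) (E : V → A → V → Prop), (∀ v, ∃ a v', E v a v') →
    ∃ σ : V → A × V, (∀ v, E v (σ v).1 (σ v).2) ∧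
      ∀ v, (∃ (ρ : ℕ → V) (lab : ℕ → A), ρ 0 = v ∧
              (∀ n, E (ρ n) (lab n) (ρ (n + 1))) ∧ lab ∈ W) →
        (fun n => (σ (stratPath σ v n)).1) ∈ W

theorem wcat_nil {A : Type*} (x : ℕ → A) : wcat [] x = x := by
  funext n
  simp [wcat]

theorem wcat_cons {A : Type*} (a : A) (w : List A) (x : ℕ → A) :
    wcat (a :: w) x = Stream'.cons a (wcat w x) := by
  funext n
  cases n <;> simp [wcat, Stream'.cons]

theorem cons_zero_succ_eq {A : Type*} (ξ : ℕ → A) :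
    Stream'.cons (ξ 0) (fun n => ξ (n + 1)) = ξ :=
  Stream'.eta ξ

section Plays

variable {V A : Type*}

def HasPlay (E : V → A → V → Prop) (v : V) (lab : ℕ → A) : Prop :=
  ∃ ρ : ℕ → V, ρ 0 = v ∧ ∀ n, E (ρ n) (lab n) (ρ (n + 1))

theorem HasPlay.cons {E : V → A → V → Prop} {v v' : V} {a : A} {lab : ℕ → A}
    (h : HasPlay E v' lab) (hE : E v a v') : HasPlay E v (Stream'.cons a lab) := by
  obtain ⟨ρ, rfl, hρ⟩ := h
  exact ⟨Stream'.cons v ρ, rfl, fun | 0 => hE | n + 1 => hρ n⟩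

def stratLabel (σ : V → A × V) (v : V) : ℕ → A := fun n => (σ (stratPath σ v n)).1

theorem stratPath_succ' (σ : V → A × V) (v : V) (n : ℕ) :
    stratPath σ v (n + 1) = stratPath σ (σ v).2 n := by
  induction n with
  | zero => rfl
  | succ n ih => exact congrArg (fun w => (σ w).2) ih

theorem stratLabel_eq_cons (σ : V → A × V) (v : V) :
    stratLabel σ v = Stream'.cons (σ v).1 (stratLabel σ (σ v).2) := by
  funext n
  cases n with
  | zero => rfl
  | succ n => exact congrArg (fun w => (σ w).1) (stratPath_succ' σ v n)

end Plays

theorem PositionalEve.exists_strategy {A : Type u} {W : Set (ℕ → A)} (hW : PositionalEve W)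
    {V : Type u} {E : V → A → V → Prop} (hE : ∀ v, ∃ a v', E v a v') :
    ∃ σ : V → A × V, (∀ v, E v (σ v).1 (σ v).2) ∧
      ∀ v lab, HasPlay E v lab → lab ∈ W → stratLabel σ v ∈ W := by
  obtain ⟨σ, hσE, hσW⟩ := hW V E hE
  exact ⟨σ, hσE, fun v lab ⟨ρ, hρ0, hρ⟩ hlab => hσW v ⟨ρ, lab, hρ0, hρ, hlab⟩⟩

namespace ChoiceGame

variable {A : Type*} (S : Set (ℕ → A))

/-- At vertex `inl w` the word `w` remains to be read before the choice vertex `inl []`, where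
Eve picks a word of `S`; vertex `inr ξ` reads `ξ`. -/
inductive Move : List A ⊕ (ℕ → A) → A → List A ⊕ (ℕ → A) → Prop
  | read (a : A) (w : List A) : Move (.inl (a :: w)) a (.inl w)
  | choose (ξ : ℕ → A) : ξ ∈ S → Move (.inl []) (ξ 0) (.inr fun n => ξ (n + 1))
  | follow (ξ : ℕ → A) : Move (.inr ξ) (ξ 0) (.inr fun n => ξ (n + 1))

theorem move_total (hS : S.Nonempty) : ∀ v, ∃ a v', Move S v a v'
  | .inl [] => ⟨_, _, .choose _ hS.some_mem⟩
  | .inl (a :: w) => ⟨_, _, .read a w⟩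
  | .inr ξ => ⟨_, _, .follow ξ⟩

theorem hasPlay_inr (ξ : ℕ → A) : HasPlay (Move S) (.inr ξ) ξ := by
  refine ⟨fun n => .inr fun k => ξ (k + n), rfl, fun n => ?_⟩
  convert Move.follow (S := S) (fun k => ξ (k + n)) using 4
  all_goals omega

theorem hasPlay_inl_wcat {ξ : ℕ → A} (hξ : ξ ∈ S) :
    ∀ w, HasPlay (Move S) (.inl w) (wcat w ξ)
  | [] => by
    rw [wcat_nil, ← cons_zero_succ_eq ξ]
    exact (hasPlay_inr S _).cons (.choose ξ hξ)
  | a :: w => by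
    rw [wcat_cons]
    exact (hasPlay_inl_wcat hξ w).cons (.read a w)

variable {S} {σ : List A ⊕ (ℕ → A) → A × (List A ⊕ (ℕ → A))}
  (hσ : ∀ v, Move S v (σ v).1 (σ v).2)
include hσ

theorem strategy_inr (ξ : ℕ → A) : σ (.inr ξ) = (ξ 0, .inr fun n => ξ (n + 1)) := by
  have h := hσ (.inr ξ)
  generalize σ (.inr ξ) = p at h
  obtain ⟨a, v⟩ := p
  cases h
  rfl

theorem strategy_inl_cons (a : A) (w : List A) : σ (.inl (a :: w)) = (a, .inl w) := by
  have h := hσ (.inl (a :: w))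
  generalize σ (.inl (a :: w)) = p at h
  obtain ⟨a, v⟩ := p
  cases h
  rfl

theorem exists_strategy_inl_nil :
    ∃ ξ ∈ S, σ (.inl []) = (ξ 0, .inr fun n => ξ (n + 1)) := by
  have h := hσ (.inl [])
  generalize σ (.inl []) = p at h
  obtain ⟨a, v⟩ := p
  cases h with
  | choose ξ hξ => exact ⟨ξ, hξ, rfl⟩

theorem stratLabel_inr (ξ : ℕ → A) : stratLabel σ (.inr ξ) = ξ := by
  funext n
  induction n generalizing ξ with
  | zero => rw [stratLabel_eq_cons, strategy_inr hσ]; rfl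
  | succ n ih => rw [stratLabel_eq_cons, strategy_inr hσ]; exact ih fun n => ξ (n + 1)

theorem stratLabel_inl_nil_mem : stratLabel σ (.inl []) ∈ S := by
  obtain ⟨ξ, hξ, hσξ⟩ := exists_strategy_inl_nil hσ
  rw [stratLabel_eq_cons, hσξ]
  rwa [stratLabel_inr hσ, cons_zero_succ_eq]

theorem stratLabel_inl : ∀ w, stratLabel σ (.inl w) = wcat w (stratLabel σ (.inl []))
  | [] => (wcat_nil _).symm
  | a :: w => by
    rw [stratLabel_eq_cons, strategy_inl_cons hσ, stratLabel_inl w, wcat_cons]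

end ChoiceGame

theorem PositionalEve.exists_uniform_continuation {A : Type u} {W : Set (ℕ → A)}
    (hW : PositionalEve W) {S : Set (ℕ → A)} (hS : S.Nonempty) :
    ∃ z ∈ S, ∀ w : List A, ∀ ξ ∈ S, wcat w ξ ∈ W → wcat w z ∈ W := by
  obtain ⟨σ, hσ, hwin⟩ := hW.exists_strategy (ChoiceGame.move_total S hS)
  refine ⟨stratLabel σ (.inl []), ChoiceGame.stratLabel_inl_nil_mem hσ, fun w ξ hξ hw => ?_⟩
  rw [← ChoiceGame.stratLabel_inl hσ]
  exact hwin _ _ (ChoiceGame.hasPlay_inl_wcat S hξ w) hw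

/-- If `W` is positional over Eve-games then its residuals are totally ordered
by inclusion. -/
theorem positional_residuals_totally_ordered {A : Type u}
    (W : Set (ℕ → A)) (hpos : PositionalEve W) (u₁ u₂ : List A) :
    resid W u₁ ⊆ resid W u₂ ∨ resid W u₂ ⊆ resid W u₁ := by
  by_contra! h
  obtain ⟨x, hx₁, hx₂⟩ := Set.not_subset.1 h.1
  obtain ⟨y, hy₂, hy₁⟩ := Set.not_subset.1 h.2
  obtain ⟨z, hz, hzW⟩ := hpos.exists_uniform_continuation (Set.insert_nonempty x {y})
  rcases hz with hzx | hzy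
  · exact hx₂ (hzx ▸ hzW u₂ y (by simp) hy₂)
  · exact hy₁ (hzy ▸ hzW u₁ x (by simp) hx₁)
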